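/- Let P be a simple d-polytope in E^d and let ε ≥ 0 satisfy ε < (1 − γ)/(√d · α). For each vertex v of P let v_ε be the point determined by the d equations q_F(v_ε) = −ε for all facets F containing v. Then: (i) vert(P_ε) = {v_ε : v ∈ vert(P)}; (ii) N(P_ε, v_ε) = N(P, v) for every vertex v; (iii) q_F(x) ≤ 2 for every facet F and every x ∈ P_ε; (iv) q_F(v_ε) ≥ −ε·√d·α for every vertex v and every facet F; (v) q_F(v_ε) ≥ 1 − γ − ε·√d·α > 0 for every vertex v and every facet F not containing v. -/

import Mathlib

noncomputable section

open Metric Set Finset Matrix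
open scoped RealInnerProductSpace BigOperators Classical

namespace AverkovHenk

abbrev E (d : ℕ) := EuclideanSpace ℝ (Fin d)

/-- Support function `h(P,u)` of `P` in direction `u`. -/
def supp {d : ℕ} (P : Set (E d)) (u : E d) : ℝ :=
  sSup ((fun x => ⟪u, x⟫) '' P)

/-- The normalized affine function `q_F` of the facet with outward unit normal `u`. -/
def qf {d : ℕ} (P : Set (E d)) (u : E d) (x : E d) : ℝ :=
  (supp P u - ⟪u, x⟫) / Metric.diam P

/-- The exposed face of `P` in direction `u`. -/
def faceOf {d : ℕ} (P : Set (E d)) (u : E d) : Set (E d) :=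
  {x ∈ P | ⟪u, x⟫ = supp P u}

/-- `u` is an outward unit normal of a facet (a `(d-1)`-dimensional face) of `P`. -/
def IsFacetNormal {d : ℕ} (P : Set (E d)) (u : E d) : Prop :=
  ‖u‖ = 1 ∧ Module.finrank ℝ ↥(vectorSpan ℝ (faceOf P u)) = d - 1

/-- The vertices of `P`, i.e. its extreme points. -/
def vertices {d : ℕ} (P : Set (E d)) : Set (E d) := Set.extremePoints ℝ P

/-- The `l`-th elementary symmetric function of `y_1, …, y_m`. -/
def esymm {m : ℕ} (y : Fin m → ℝ) (l : ℕ) : ℝ :=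
  ∑ J ∈ Finset.powersetCard l (Finset.univ : Finset (Fin m)), ∏ j ∈ J, y j

/-- A presentation of a convex `d`-polytope `P ⊆ E^d` by the `m` outward unit normals
`u 0, …, u (m-1)` of its facets, together with the induced representation
`P = {x | q_j(x) ≥ 0 for all j}`. -/
structure FacetRep (d m : ℕ) where
  P : Set (E d)
  u : Fin m → E d
  convex : Convex ℝ P
  compact : IsCompact P
  fulldim : (interior P).Nonempty
  inj : Function.Injective u
  facet : ∀ j, IsFacetNormal P (u j)
  complete : ∀ w : E d, IsFacetNormal P w → ∃ j, w = u j
  rep : P = {x | ∀ j, 0 ≤ qf P (u j) x}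

namespace FacetRep

variable {d m : ℕ}

/-- The vector `q(x) = (q_1(x), …, q_m(x))`. -/
def q (R : FacetRep d m) (x : E d) : Fin m → ℝ := fun j => qf R.P (R.u j) x

/-- The indices of the facets containing the point `v`. -/
def act (R : FacetRep d m) (v : E d) : Finset (Fin m) :=
  Finset.univ.filter fun j => R.q v j = 0

/-- The polytope is simple: each vertex lies on exactly `d` facets. -/
def Simple (R : FacetRep d m) : Prop :=
  ∀ v ∈ vertices R.P, (R.act v).card = d

/-- The enlarged polytope `P_ε`. -/
def Peps (R : FacetRep d m) (ε : ℝ) : Set (E d) := {x | ∀ j, -ε ≤ R.q x j}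

/-- The box `Π_{v,ε} = {x : |q_v(x)|_∞ ≤ ε}`. -/
def Piv (R : FacetRep d m) (v : E d) (ε : ℝ) : Set (E d) :=
  {x | ∀ j ∈ R.act v, |R.q x j| ≤ ε}

/-- The cone `C_v = {x : -σ_1(q_v(x)) ≥ (2/3)|q_v(x)|}` (Euclidean norm). -/
def Cv (R : FacetRep d m) (v : E d) : Set (E d) :=
  {x | (2/3) * Real.sqrt (∑ j ∈ R.act v, (R.q x j)^2) ≤ -(∑ j ∈ R.act v, R.q x j)}

/-- The polytope `P^v_{ε,δ}`. -/
def Pv (R : FacetRep d m) (v : E d) (ε δ : ℝ) : Set (E d) :=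
  {x | (∀ j ∈ R.act v, -ε ≤ R.q x j) ∧ ∀ j ∉ R.act v, δ ≤ R.q x j}

/-- `γ = max{1 - q_F(v) : F a facet, v a vertex not on F}`. -/
def gam (R : FacetRep d m) : ℝ :=
  sSup {c | ∃ v ∈ vertices R.P, ∃ j, R.q v j ≠ 0 ∧ c = 1 - R.q v j}

/-- The polynomial `f_k` built from weights `y_v` over the vertex set `V`. -/
def fk (R : FacetRep d m) (V : Finset (E d)) (y : ↥V → ℝ) (k : ℕ) (x : E d) : ℝ :=
  ∑ v : ↥V, y v * ((∑ j ∈ R.act v.1, (1 - R.q x j)^(2*k)) / (R.act v.1).card)^(2*k)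

/-- The matrix `A_k` indexed by the vertex set `V`. -/
def Ak (R : FacetRep d m) (V : Finset (E d)) (k : ℕ) : Matrix ↥V ↥V ℝ :=
  Matrix.of fun w v : ↥V => ((∑ j ∈ R.act v.1, (1 - R.q w.1 j)^(2*k)) / (R.act v.1).card)^(2*k)

/-- `deg(P)`: the maximal number of facets through a vertex. -/
def degP (R : FacetRep d m) (V : Finset (E d)) : ℕ := V.sup fun v => (R.act v).card

end FacetRep

/-- `|U_s^{-1}|_2` where `U_s` is the matrix with rows `u_j^T`, `j ∈ s`: the supremum of `‖x‖`
over the set where the Euclidean norm of `U_s x` is at most `1`. -/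
def invNormU {d m : ℕ} (u : Fin m → E d) (s : Finset (Fin m)) : ℝ :=
  sSup {c | ∃ x : E d, Real.sqrt (∑ j ∈ s, (⟪u j, x⟫)^2) ≤ 1 ∧ c = ‖x‖}

/-- `α = max_{v ∈ vert(P)} |U_v^{-1}|_2`. -/
def alpha {d m : ℕ} (R : FacetRep d m) (V : Finset (E d)) : ℝ :=
  sSup {a | ∃ v ∈ V, a = invNormU R.u (R.act v)}

/-- The normal cone `N(Q,x) = {u : ⟨x,u⟩ = h(Q,u)}`. -/
def normalCone {d : ℕ} (Q : Set (E d)) (x : E d) : Set (E d) :=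
  {u | ⟪u, x⟫ = supp Q u}

/-- `S` is an edge (a 1-dimensional face) of `P`. -/
def IsEdgeOf {d : ℕ} (P S : Set (E d)) : Prop :=
  IsExposed ℝ P S ∧ Module.finrank ℝ ↥(vectorSpan ℝ S) = 1

/-!
Near a vertex `v`, the polytope `P_ε` is cut out by the same `d` facet inequalities as `P`, each
pushed outwards by `ε`, and `v_ε` is the vertex where these shifted inequalities are tight. Since
`|U_v⁻¹|₂ ≤ α`, the shift is `‖v_ε - v‖ ≤ α √d ε diam P`, which gives (iv) and (v): `v_ε` satisfies
every other facet inequality of `P_ε` strictly, so it has the same active facets as `v`. Whether a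
point of a polyhedron is extreme, and which functionals it maximises, depends only on its active
constraints; hence `v_ε` is a vertex of `P_ε` and `N(P_ε, v_ε) = N(P, v)`. A functional separating a
point of `P_ε` from `conv {v_ε}` is maximised over `P` at some vertex `v`, hence over `P_ε` at
`v_ε`, which is absurd; so `P_ε = conv {v_ε}`, which gives (i), and (iii) follows from
`q_F(v_ε) ≤ 2`.
-/

open Filter Topology

theorem _root_.norm_le_sSup_mul_norm_of_injective {X Y : Type*} [NormedAddCommGroup X]
    [NormedSpace ℝ X] [FiniteDimensional ℝ X] [NormedAddCommGroup Y] [NormedSpace ℝ Y]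
    {T : X →ₗ[ℝ] Y} (hT : Function.Injective T) (x : X) :
    ‖x‖ ≤ sSup {c | ∃ y, ‖T y‖ ≤ 1 ∧ c = ‖y‖} * ‖T x‖ := by
  obtain ⟨K, -, hK⟩ := T.injective_iff_antilipschitz.mp hT
  have hbdd : BddAbove {c | ∃ y, ‖T y‖ ≤ 1 ∧ c = ‖y‖} := by
    refine ⟨K, ?_⟩
    rintro _ ⟨y, hy, rfl⟩
    have := hK.le_mul_dist y 0
    rw [dist_zero_right, map_zero, dist_zero_right] at this
    nlinarith [K.coe_nonneg]
  rcases eq_or_ne (T x) 0 with hx | hx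
  · simp [hT (hx.trans T.map_zero.symm)]
  have hTx : 0 < ‖T x‖ := norm_pos_iff.mpr hx
  have hmem : ‖T x‖⁻¹ * ‖x‖ ∈ {c | ∃ y, ‖T y‖ ≤ 1 ∧ c = ‖y‖} :=
    ⟨‖T x‖⁻¹ • x, by simp [norm_smul, hTx.ne'], by simp [norm_smul]⟩
  calc ‖x‖ = ‖T x‖⁻¹ * ‖x‖ * ‖T x‖ := by field_simp
    _ ≤ _ := by gcongr; exact le_csSup hbdd hmem

theorem _root_.IsCompact.exists_mem_extremePoints_isMaxOn {X : Type*} [AddCommGroup X]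
    [Module ℝ X] [TopologicalSpace X] [T2Space X] [IsTopologicalAddGroup X] [ContinuousSMul ℝ X]
    [LocallyConvexSpace ℝ X] {s : Set X} (hs : IsCompact s) (hne : s.Nonempty) (l : X →L[ℝ] ℝ) :
    ∃ x ∈ extremePoints ℝ s, IsMaxOn l s x := by
  obtain ⟨z, hz, hmax⟩ := hs.exists_isMaxOn hne l.continuous.continuousOn
  have hexp : IsExposed ℝ s {x ∈ s | ∀ y ∈ s, l y ≤ l x} := fun _ => ⟨l, rfl⟩
  obtain ⟨x, hx⟩ := (hexp.isCompact hs).extremePoints_nonempty ⟨z, hz, hmax⟩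
  exact ⟨x, hexp.isExtreme.extremePoints_subset_extremePoints hx, hx.1.2⟩

section InvNormU

variable {d m : ℕ}

theorem invNormU_nonneg (u : Fin m → E d) (s : Finset (Fin m)) : 0 ≤ invNormU u s :=
  Real.sSup_nonneg (by rintro _ ⟨x, -, rfl⟩; exact norm_nonneg x)

theorem norm_le_invNormU_mul {u : Fin m → E d} {s : Finset (Fin m)}
    (hs : ∀ w, (∀ j ∈ s, ⟪u j, w⟫ = 0) → w = 0) (x : E d) :
    ‖x‖ ≤ invNormU u s * √(∑ j ∈ s, ⟪u j, x⟫ ^ 2) := by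
  unfold invNormU
  let T : E d →ₗ[ℝ] EuclideanSpace ℝ s :=
    (EuclideanSpace.equiv s ℝ).symm.toLinearMap ∘ₗ LinearMap.pi fun j => innerₛₗ ℝ (u j)
  have hT : ∀ y, ‖T y‖ = √(∑ j ∈ s, ⟪u j, y⟫ ^ 2) := fun y => by
    rw [EuclideanSpace.norm_eq, ← Finset.sum_coe_sort s]
    simp [T]
  have hinj : Function.Injective T := by
    rw [← LinearMap.ker_eq_bot, LinearMap.ker_eq_bot']
    refine fun w hw => hs w fun j hj => ?_
    simpa [T] using congrArg (fun z : EuclideanSpace ℝ s => z ⟨j, hj⟩) hw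
  simpa only [hT] using norm_le_sSup_mul_norm_of_injective hinj x

theorem invNormU_le_alpha (R : FacetRep d m) {V : Finset (E d)} {v : E d} (hv : v ∈ V) :
    invNormU R.u (R.act v) ≤ alpha R V := by
  refine le_csSup ((V.finite_toSet.image fun v => invNormU R.u (R.act v)).bddAbove.mono ?_)
    ⟨v, hv, rfl⟩
  rintro _ ⟨v, hv, rfl⟩
  exact ⟨v, hv, rfl⟩

theorem alpha_nonneg (R : FacetRep d m) (V : Finset (E d)) : 0 ≤ alpha R V :=
  Real.sSup_nonneg (by rintro _ ⟨v, -, rfl⟩; exact invNormU_nonneg _ _)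

end InvNormU

theorem mem_normalCone_iff {d : ℕ} {Q : Set (E d)} (hQ : IsCompact Q) {x : E d} (hx : x ∈ Q)
    (y : E d) : y ∈ normalCone Q x ↔ IsMaxOn (innerSL ℝ y) Q x := by
  simp only [normalCone, supp, mem_ofPred_eq, isMaxOn_iff, innerSL_apply_apply]
  refine ⟨fun h z hz => h ▸ le_csSup ?_ (mem_image_of_mem _ hz), fun h => ?_⟩
  · exact (hQ.image (innerSL ℝ y).continuous).bddAbove
  · refine (IsGreatest.csSup_eq ⟨mem_image_of_mem _ hx, ?_⟩).symm
    rintro _ ⟨z, hz, rfl⟩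
    exact h z hz

namespace FacetRep

variable {d m : ℕ} (R : FacetRep d m)

theorem diam_pos (hd : 0 < d) : 0 < diam R.P := by
  have : Nonempty (Fin d) := ⟨⟨0, hd⟩⟩
  obtain ⟨x, hx⟩ := R.fulldim
  obtain ⟨r, hr, hball⟩ := Metric.isOpen_iff.mp isOpen_interior x hx
  calc 0 < 2 * r := by positivity
    _ = diam (ball x r) := (diam_ball_eq x hr.le).symm
    _ ≤ diam R.P := diam_mono (hball.trans interior_subset) R.compact.isBounded

theorem q_sub_q (x y : E d) (j : Fin m) : R.q x j - R.q y j = ⟪R.u j, y - x⟫ / diam R.P := by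
  simp only [q, qf, inner_sub_right]
  ring

theorem q_add_smul (x : E d) (t : ℝ) (w : E d) (j : Fin m) :
    R.q (x + t • w) j = R.q x j - t * ⟪R.u j, w⟫ / diam R.P := by
  simp only [q, qf, inner_add_right, real_inner_smul_right]
  ring

theorem q_smul_add_smul {a b : ℝ} (hab : a + b = 1) (x y : E d) (j : Fin m) :
    R.q (a • x + b • y) j = a * R.q x j + b * R.q y j := by
  simp only [q, qf, inner_add_right, real_inner_smul_right]
  rw [eq_sub_of_add_eq' hab]
  ring

theorem P_eq_Peps_zero : R.P = R.Peps 0 := by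
  conv_lhs => rw [R.rep]
  simp [Peps, q]

theorem q_nonneg {x : E d} (hx : x ∈ R.P) (j : Fin m) : 0 ≤ R.q x j := by
  simpa using (R.P_eq_Peps_zero ▸ hx : x ∈ R.Peps 0) j

theorem q_le_one {x : E d} (hx : x ∈ R.P) (j : Fin m) : R.q x j ≤ 1 := by
  refine div_le_one_of_le₀ ?_ diam_nonneg
  suffices supp R.P (R.u j) ≤ ⟪R.u j, x⟫ + diam R.P by linarith
  refine csSup_le ((R.fulldim.mono interior_subset).image _) ?_
  rintro _ ⟨z, hz, rfl⟩
  have := real_inner_le_norm (R.u j) (z - x)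
  rw [(R.facet j).1, one_mul, inner_sub_right, ← dist_eq_norm] at this
  linarith [dist_le_diam_of_mem R.compact.isBounded hz hx]

theorem mem_act {v : E d} {j : Fin m} : j ∈ R.act v ↔ R.q v j = 0 := by
  simp [act]

theorem le_gam {v : E d} (hv : v ∈ vertices R.P) {j : Fin m} (hj : j ∉ R.act v) :
    1 - R.q v j ≤ R.gam := by
  refine le_csSup ⟨1, ?_⟩ ⟨v, hv, j, (R.mem_act).not.mp hj, rfl⟩
  rintro _ ⟨w, hw, i, -, rfl⟩
  linarith [R.q_nonneg hw.1 i]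

theorem convex_Peps (ε : ℝ) : Convex ℝ (R.Peps ε) := by
  intro x hx y hy a b ha hb hab j
  have hxj : -ε ≤ R.q x j := hx j
  have hyj : -ε ≤ R.q y j := hy j
  rw [R.q_smul_add_smul hab, eq_sub_of_add_eq hab]
  nlinarith

theorem eventually_add_smul_mem_Peps {ε : ℝ} {x w : E d} (hx : x ∈ R.Peps ε)
    (hw : ∀ j, R.q x j = -ε → ⟪R.u j, w⟫ ≤ 0) :
    ∀ᶠ t in 𝓝[>] (0 : ℝ), x + t • w ∈ R.Peps ε := by
  simp only [Peps, mem_ofPred_eq, R.q_add_smul, eventually_all]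
  intro j
  rcases (hx j).eq_or_lt with hj | hj
  · filter_upwards [self_mem_nhdsWithin] with t (ht : 0 < t)
    have : t * ⟪R.u j, w⟫ / diam R.P ≤ 0 :=
      div_nonpos_of_nonpos_of_nonneg (mul_nonpos_of_nonneg_of_nonpos ht.le (hw j hj.symm))
        diam_nonneg
    linarith
  · exact nhdsWithin_le_nhds <|
      (continuousAt_const.eventually_lt (by fun_prop) (by simpa using hj)).mono fun _ h => h.le

theorem q_eq_of_mem_openSegment {ε : ℝ} {x₁ x₂ x : E d} (h₁ : x₁ ∈ R.Peps ε)
    (h₂ : x₂ ∈ R.Peps ε) (hx : x ∈ openSegment ℝ x₁ x₂) {j : Fin m} (hj : R.q x j = -ε) :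
    R.q x₁ j = -ε := by
  obtain ⟨a, b, ha, hb, hab, rfl⟩ := hx
  have hx₁ : -ε ≤ R.q x₁ j := h₁ j
  have hx₂ : -ε ≤ R.q x₂ j := h₂ j
  rw [R.q_smul_add_smul hab, eq_sub_of_add_eq hab] at hj
  refine le_antisymm (not_lt.mp fun h => ?_) hx₁
  nlinarith

theorem mem_extremePoints_Peps_iff (hD : 0 < diam R.P) {ε : ℝ} {x : E d} :
    x ∈ extremePoints ℝ (R.Peps ε) ↔
      x ∈ R.Peps ε ∧ ∀ w, (∀ j, R.q x j = -ε → ⟪R.u j, w⟫ = 0) → w = 0 := by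
  refine ⟨fun hx => ⟨hx.1, fun w hw => ?_⟩, fun ⟨hx, hspan⟩ => ?_⟩
  · have hw' : ∀ j, R.q x j = -ε → ⟪R.u j, -w⟫ ≤ 0 := fun j hj => by simp [hw j hj]
    obtain ⟨t, hplus, hminus, ht⟩ := ((R.eventually_add_smul_mem_Peps hx.1
      fun j hj => (hw j hj).le).and ((R.eventually_add_smul_mem_Peps hx.1 hw').and
        self_mem_nhdsWithin)).exists
    have hmid : x ∈ openSegment ℝ (x + t • w) (x + t • -w) :=
      ⟨1 / 2, 1 / 2, by norm_num, by norm_num, by norm_num, by module⟩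
    simpa [(ht : 0 < t).ne'] using hx.2 hplus hminus hmid
  · refine mem_extremePoints_iff_left.mpr ⟨hx, fun x₁ h₁ x₂ h₂ hseg => ?_⟩
    refine sub_eq_zero.mp (hspan _ fun j hj => ?_)
    have := R.q_sub_q x x₁ j
    rw [hj, R.q_eq_of_mem_openSegment h₁ h₂ hseg hj, sub_self, eq_comm, div_eq_zero_iff] at this
    exact this.resolve_right hD.ne'

theorem isMaxOn_Peps_iff (hD : 0 < diam R.P) {ε : ℝ} {x : E d} (hx : x ∈ R.Peps ε)
    (l : E d →L[ℝ] ℝ) :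
    IsMaxOn l (R.Peps ε) x ↔ ∀ w, (∀ j, R.q x j = -ε → ⟪R.u j, w⟫ ≤ 0) → l w ≤ 0 := by
  rw [isMaxOn_iff]
  refine ⟨fun hmax w hw => ?_, fun hcone z hz => ?_⟩
  · obtain ⟨t, hmem, ht⟩ :=
      ((R.eventually_add_smul_mem_Peps hx hw).and self_mem_nhdsWithin).exists
    have := hmax _ hmem
    rw [map_add, map_smul, smul_eq_mul] at this
    nlinarith [(ht : 0 < t)]
  · have := hcone (z - x) fun j hj => by
      have hz' : -ε ≤ R.q z j := hz j
      have := R.q_sub_q x z j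
      rw [hj] at this
      nlinarith [div_mul_cancel₀ ⟪R.u j, z - x⟫ hD.ne']
    rw [map_sub] at this
    linarith

theorem mem_extremePoints_Peps_iff_of_active_iff (hD : 0 < diam R.P) {ε ε' : ℝ} {x x' : E d}
    (hx : x ∈ R.Peps ε) (hx' : x' ∈ R.Peps ε') (hact : ∀ j, R.q x j = -ε ↔ R.q x' j = -ε') :
    x ∈ extremePoints ℝ (R.Peps ε) ↔ x' ∈ extremePoints ℝ (R.Peps ε') := by
  simp only [R.mem_extremePoints_Peps_iff hD, hx, hx', hact, true_and]

theorem isMaxOn_Peps_iff_of_active_iff (hD : 0 < diam R.P) {ε ε' : ℝ} {x x' : E d}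
    (hx : x ∈ R.Peps ε) (hx' : x' ∈ R.Peps ε') (hact : ∀ j, R.q x j = -ε ↔ R.q x' j = -ε')
    (l : E d →L[ℝ] ℝ) : IsMaxOn l (R.Peps ε) x ↔ IsMaxOn l (R.Peps ε') x' := by
  simp only [R.isMaxOn_Peps_iff hD hx, R.isMaxOn_Peps_iff hD hx', hact]

theorem eq_zero_of_forall_act_inner_eq_zero (hD : 0 < diam R.P) {v : E d}
    (hv : v ∈ vertices R.P) {w : E d} (hw : ∀ j ∈ R.act v, ⟪R.u j, w⟫ = 0) : w = 0 := by
  rw [vertices, R.P_eq_Peps_zero, R.mem_extremePoints_Peps_iff hD] at hv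
  exact hv.2 w fun j hj => hw j (R.mem_act.mpr (by simpa using hj))

theorem abs_q_sub_q_le (hD : 0 < diam R.P) {ε : ℝ} {v x : E d} (hv : v ∈ vertices R.P)
    (hcard : (R.act v).card = d) (hε : 0 ≤ ε) (hx : ∀ j ∈ R.act v, R.q x j = -ε) (j : Fin m) :
    |R.q x j - R.q v j| ≤ ε * √d * invNormU R.u (R.act v) := by
  have hinner : ∀ i ∈ R.act v, ⟪R.u i, x - v⟫ = ε * diam R.P := fun i hi => by
    have := R.q_sub_q v x i
    rw [R.mem_act.mp hi, hx i hi, eq_div_iff hD.ne'] at this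
    linarith
  have hnorm :=
    norm_le_invNormU_mul (fun _ => R.eq_zero_of_forall_act_inner_eq_zero hD hv) (x - v)
  rw [Finset.sum_congr rfl fun i hi => by rw [hinner i hi], sum_const, hcard, nsmul_eq_mul,
    Real.sqrt_mul (Nat.cast_nonneg _), Real.sqrt_sq (by positivity)] at hnorm
  rw [R.q_sub_q, abs_div, abs_of_pos hD, div_le_iff₀ hD]
  calc |⟪R.u j, v - x⟫| ≤ ‖x - v‖ := by
        simpa [(R.facet j).1, norm_sub_rev] using abs_real_inner_le_norm (R.u j) (v - x)
    _ ≤ invNormU R.u (R.act v) * (√d * (ε * diam R.P)) := hnorm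
    _ = ε * √d * invNormU R.u (R.act v) * diam R.P := by ring

section ActiveSets

variable (hD : 0 < diam R.P) {ε : ℝ} {v x : E d} (hv : v ∈ vertices R.P) (hx : x ∈ R.Peps ε)
  (hact : ∀ j, j ∈ R.act v ↔ R.q x j = -ε)
include hD hv hx hact

theorem mem_extremePoints_Peps_of_active_iff : x ∈ extremePoints ℝ (R.Peps ε) := by
  have hv0 : v ∈ extremePoints ℝ (R.Peps 0) := R.P_eq_Peps_zero ▸ hv
  exact (R.mem_extremePoints_Peps_iff_of_active_iff hD hv0.1 hx
    (by simpa [mem_act] using hact)).mp hv0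

theorem isMaxOn_P_iff_of_active_iff (l : E d →L[ℝ] ℝ) :
    IsMaxOn l R.P v ↔ IsMaxOn l (R.Peps ε) x := by
  have hv0 : v ∈ R.Peps 0 := R.P_eq_Peps_zero ▸ hv.1
  rw [R.P_eq_Peps_zero]
  exact R.isMaxOn_Peps_iff_of_active_iff hD hv0 hx (by simpa [mem_act] using hact) l

end ActiveSets

section Enlargement

variable (hD : 0 < diam R.P) {ε : ℝ} {V : Finset (E d)} {vε : E d → E d}
  (hV : (↑V : Set (E d)) = vertices R.P) (hmem : ∀ v ∈ V, vε v ∈ R.Peps ε)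
  (hact : ∀ v ∈ V, ∀ j, j ∈ R.act v ↔ R.q (vε v) j = -ε)
include hD hV hmem hact

theorem Peps_eq_convexHull : R.Peps ε = convexHull ℝ (vε '' V) := by
  refine Subset.antisymm (fun x hx => ?_)
    (convexHull_min (Set.image_subset_iff.mpr hmem) (R.convex_Peps ε))
  by_contra hxS
  obtain ⟨l, s, hlS, hlx⟩ := geometric_hahn_banach_closed_point (convex_convexHull ℝ _)
    ((V.finite_toSet.image vε).isClosed_convexHull ℝ) hxS
  obtain ⟨v, hv, hmax⟩ :=
    R.compact.exists_mem_extremePoints_isMaxOn (R.fulldim.mono interior_subset) l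
  have hvV : v ∈ V := by rwa [← Finset.mem_coe, hV]
  have := isMaxOn_iff.mp ((R.isMaxOn_P_iff_of_active_iff hD hv (hmem v hvV) (hact v hvV) l).mp
    hmax) x hx
  linarith [hlS _ (subset_convexHull ℝ _ ⟨v, hvV, rfl⟩)]

theorem vertices_Peps_eq : vertices (R.Peps ε) = vε '' V := by
  refine Subset.antisymm ?_ ?_
  · rw [vertices, R.Peps_eq_convexHull hD hV hmem hact]
    exact extremePoints_convexHull_subset
  · rintro _ ⟨v, hv, rfl⟩
    exact R.mem_extremePoints_Peps_of_active_iff hD (hV ▸ hv) (hmem v hv) (hact v hv)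

theorem normalCone_Peps_eq {v : E d} (hv : v ∈ V) :
    normalCone (R.Peps ε) (vε v) = normalCone R.P v := by
  have hcpt : IsCompact (R.Peps ε) := R.Peps_eq_convexHull hD hV hmem hact ▸
    (V.finite_toSet.image vε).isCompact_convexHull ℝ
  have hvP : v ∈ vertices R.P := hV ▸ hv
  ext y
  rw [mem_normalCone_iff hcpt (hmem v hv), mem_normalCone_iff R.compact hvP.1]
  exact (R.isMaxOn_P_iff_of_active_iff hD hvP (hmem v hv) (hact v hv) _).symm

theorem q_le_of_mem_Peps {c : ℝ} {j : Fin m} (hc : ∀ v ∈ V, R.q (vε v) j ≤ c) {x : E d}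
    (hx : x ∈ R.Peps ε) : R.q x j ≤ c := by
  rw [R.Peps_eq_convexHull hD hV hmem hact] at hx
  refine convexHull_min (t := {y | R.q y j ≤ c}) (Set.image_subset_iff.mpr hc)
    (fun y hy z hz a b ha hb hab => ?_) hx
  have hy' : R.q y j ≤ c := hy
  have hz' : R.q z j ≤ c := hz
  show R.q (a • y + b • z) j ≤ c
  rw [R.q_smul_add_smul hab, eq_sub_of_add_eq hab]
  nlinarith

end Enlargement

end FacetRep

theorem statement11_general (d m : ℕ) (R : FacetRep d m) (hs : R.Simple)
    (V : Finset (E d)) (hV : (↑V : Set (E d)) = vertices R.P)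
    (ε : ℝ) (hε0 : 0 ≤ ε) (hε : ε < (1 - R.gam) / (Real.sqrt d * alpha R V))
    (vε : E d → E d) (hvε : ∀ v ∈ V, ∀ j ∈ R.act v, R.q (vε v) j = -ε) :
    vertices (R.Peps ε) = vε '' ↑V ∧
    (∀ v ∈ V, normalCone (R.Peps ε) (vε v) = normalCone R.P v) ∧
    (∀ x ∈ R.Peps ε, ∀ j, R.q x j ≤ 2) ∧
    (∀ v ∈ V, ∀ j, -(ε * Real.sqrt d * alpha R V) ≤ R.q (vε v) j) ∧
    (∀ v ∈ V, ∀ j ∉ R.act v, 1 - R.gam - ε * Real.sqrt d * alpha R V ≤ R.q (vε v) j) ∧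
    0 < 1 - R.gam - ε * Real.sqrt d * alpha R V := by
  have hα := alpha_nonneg R V
  -- `hε` reads `ε < 0` when `√d * α = 0`, because of division by zero.
  have hβ : 0 < √d * alpha R V := by
    refine (mul_nonneg (Real.sqrt_nonneg _) hα).lt_of_ne fun h => ?_
    rw [← h, div_zero] at hε
    linarith
  have hD := R.diam_pos (Nat.cast_pos.mp (Real.sqrt_pos.mp (pos_of_mul_pos_left hβ hα)))
  have hvert : ∀ v ∈ V, v ∈ vertices R.P := fun v hv => hV ▸ hv
  have hclose : ∀ v ∈ V, ∀ j, |R.q (vε v) j - R.q v j| ≤ ε * √d * alpha R V := fun v hv j =>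
    (R.abs_q_sub_q_le hD (hvert v hv) (hs v (hvert v hv)) hε0 (hvε v hv) j).trans
      (by gcongr; exact invNormU_le_alpha R hv)
  have hfar : ∀ v ∈ V, ∀ j ∉ R.act v, 1 - R.gam - ε * √d * alpha R V ≤ R.q (vε v) j :=
    fun v hv j hj => by linarith [R.le_gam (hvert v hv) hj, (abs_le.mp (hclose v hv j)).1]
  have hpos : 0 < 1 - R.gam - ε * √d * alpha R V := by
    linarith [mul_assoc ε √d (alpha R V) ▸ (lt_div_iff₀ hβ).mp hε]
  have hact : ∀ v ∈ V, ∀ j, j ∈ R.act v ↔ R.q (vε v) j = -ε := fun v hv j =>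
    ⟨hvε v hv j, fun h => by_contra fun hj => by linarith [hfar v hv j hj]⟩
  have hmem : ∀ v ∈ V, vε v ∈ R.Peps ε := fun v hv j => by
    by_cases hj : j ∈ R.act v
    · exact (hvε v hv j hj).ge
    · linarith [hfar v hv j hj]
  refine ⟨R.vertices_Peps_eq hD hV hmem hact,
    fun v hv => R.normalCone_Peps_eq hD hV hmem hact hv,
    fun x hx j => R.q_le_of_mem_Peps hD hV hmem hact (fun v hv => ?_) hx,
    fun v hv j => ?_, hfar, hpos⟩
  · by_cases hj : j ∈ R.act v
    · linarith [hvε v hv j hj]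
    · linarith [R.le_gam (hvert v hv) hj, R.q_le_one (hvert v hv).1 j,
        (abs_le.mp (hclose v hv j)).2]
  · linarith [(abs_le.mp (hclose v hv j)).1, R.q_nonneg (hvert v hv).1 j]

theorem statement11 (d m : ℕ) (hd : 2 ≤ d) (R : FacetRep d m) (hs : R.Simple)
    (V : Finset (E d)) (hV : (↑V : Set (E d)) = vertices R.P)
    (ε : ℝ) (hε0 : 0 ≤ ε) (hε : ε < (1 - R.gam) / (Real.sqrt d * alpha R V))
    (vε : E d → E d) (hvε : ∀ v ∈ V, ∀ j ∈ R.act v, R.q (vε v) j = -ε) :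
    vertices (R.Peps ε) = vε '' ↑V ∧
    (∀ v ∈ V, normalCone (R.Peps ε) (vε v) = normalCone R.P v) ∧
    (∀ x ∈ R.Peps ε, ∀ j, R.q x j ≤ 2) ∧
    (∀ v ∈ V, ∀ j, -(ε * Real.sqrt d * alpha R V) ≤ R.q (vε v) j) ∧
    (∀ v ∈ V, ∀ j ∉ R.act v, 1 - R.gam - ε * Real.sqrt d * alpha R V ≤ R.q (vε v) j) ∧
    0 < 1 - R.gam - ε * Real.sqrt d * alpha R V :=
  statement11_general d m R hs V hV ε hε0 hε vε hvε

end AverkovHenk
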